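/- Let P be a finite nonempty collection of cells and let [a,b] and [α,β] be inner intervals of P with a=(i,j), b=(k,l), c=(i,l), d=(k,j), γ=b and α=(k,n)∈]d,b[ (so j<n<l, β=(p,l) with p>k and δ=(p,n)); set h=(i,n) and r=(p,j). Let <^P be a P-order such that gcd(in(f_{a,b}), in(f_{α,β}))≠1. Then S(f_{a,b},f_{α,β}) reduces to 0 modulo G with respect to <^P_lex if and only if one of the following holds: (1) x_a x_α x_β <^P_lex x_δ x_c x_d, and either both h <^P c and β <^P c, or both h <^P δ and β <^P δ; (2) x_a x_α x_β <^P_lex x_δ x_c x_d, the set {d,δ,α,r} is the vertex set of an inner interval of P, and either both r <^P δ and α <^P δ, or both r <^P d and α <^P d; (3) x_δ x_c x_d <^P_lex x_a x_α x_β, and either both h <^P a and d <^P a, or both h <^P α and d <^P α; (4) x_δ x_c x_d <^P_lex x_a x_α x_β, the set {d,δ,α,r} is the vertex set of an inner interval of P, and either both r <^P a and c <^P a, or both r <^P β and c <^P β. -/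

import Mathlib

namespace ClosedPathPaper

open MvPolynomial

/-- Lattice points of `ℤ²`; a cell is identified with its lower left corner. -/
abbrev Pt : Type := ℤ × ℤ

/-- The four vertices (corners) of the unit cell with lower left corner `a`. -/
def cellVerts (a : Pt) : Set Pt :=
  {a, (a.1 + 1, a.2), (a.1, a.2 + 1), (a.1 + 1, a.2 + 1)}

/-- The vertex set `V(P)` of a collection of cells `P`. -/
def VP (P : Finset Pt) : Set Pt := ⋃ a ∈ P, cellVerts a

/-- `[a,b]` is a proper interval and every cell contained in it belongs to `P`. -/
def IsInnerInterval (P : Finset Pt) (a b : Pt) : Prop :=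
  a.1 < b.1 ∧ a.2 < b.2 ∧
    ∀ c : Pt, a.1 ≤ c.1 → c.1 < b.1 → a.2 ≤ c.2 → c.2 < b.2 → c ∈ P

/-- The four corners of the proper interval `[a,b]`:
diagonal corners `a, b` and anti-diagonal corners `c = (a.1, b.2)`, `d = (b.1, a.2)`. -/
def cornersOf (a b : Pt) : Finset Pt := {a, b, (a.1, b.2), (b.1, a.2)}

/-- The inner 2-minor `f_{a,b} = x_a x_b - x_c x_d` attached to the inner interval `[a,b]`. -/
noncomputable def innerMinor (K : Type*) [Field K] (a b : Pt) : MvPolynomial Pt K :=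
  X a * X b - X (a.1, b.2) * X (b.1, a.2)

/-- The set `G` of all inner 2-minors of `P`. -/
def minorsSet (K : Type*) [Field K] (P : Finset Pt) : Set (MvPolynomial Pt K) :=
  {f | ∃ a b : Pt, IsInnerInterval P a b ∧ f = innerMinor K a b}

/-- The polyomino ideal `I_P`. -/
noncomputable def polyoIdeal (K : Type*) [Field K] (P : Finset Pt) :
    Ideal (MvPolynomial Pt K) :=
  Ideal.span (minorsSet K P)

/-! ### Monomial orders -/

/-- Strict lexicographic comparison of exponent vectors induced by the
(strict total) order `po` on the variables. -/
def lexLt (po : Pt → Pt → Prop) (u v : Pt →₀ ℕ) : Prop :=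
  ∃ w : Pt, u w < v w ∧ ∀ w' : Pt, po w w' → u w' = v w'

def lexLe (po : Pt → Pt → Prop) (u v : Pt →₀ ℕ) : Prop := u = v ∨ lexLt po u v

/-- `m` is the leading monomial of `f` with respect to the lexicographic order
induced by `po`. -/
def IsLM {K : Type*} [Field K] (po : Pt → Pt → Prop) (f : MvPolynomial Pt K)
    (m : Pt →₀ ℕ) : Prop :=
  m ∈ f.support ∧ ∀ m' ∈ f.support, lexLe po m' m

/-- `sp` is the S-polynomial of `f` and `g` with respect to the lexicographic
order induced by `po`. -/
def IsSPoly {K : Type*} [Field K] (po : Pt → Pt → Prop) (f g sp : MvPolynomial Pt K) : Prop :=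
  ∃ mf mg : Pt →₀ ℕ, IsLM po f mf ∧ IsLM po g mg ∧
    sp = monomial (mf ⊔ mg - mf) (f.coeff mf)⁻¹ * f
       - monomial (mf ⊔ mg - mg) (g.coeff mg)⁻¹ * g

/-- `h` has a standard expression with respect to `G`, i.e. `h` reduces to `0`
modulo `G` with respect to the lexicographic order induced by `po`. -/
def ReducesToZero {K : Type*} [Field K] (po : Pt → Pt → Prop)
    (G : Set (MvPolynomial Pt K)) (h : MvPolynomial Pt K) : Prop :=
  ∃ (F : Finset (MvPolynomial Pt K)) (q : MvPolynomial Pt K → MvPolynomial Pt K),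
    ↑F ⊆ G ∧ h = ∑ g ∈ F, q g * g ∧
    ∀ g ∈ F, ∀ m, IsLM po (q g * g) m → ∃ mh, IsLM po h mh ∧ lexLe po m mh

/-- The exponent vector of `x_u x_v x_w`. -/
noncomputable def mono3 (u v w : Pt) : Pt →₀ ℕ :=
  Finsupp.single u 1 + Finsupp.single v 1 + Finsupp.single w 1

/-- The leading monomials, viewed as polynomials, of the members of `G`. -/
def leadingMonomials {K : Type*} [Field K] (po : Pt → Pt → Prop)
    (G : Set (MvPolynomial Pt K)) : Set (MvPolynomial Pt K) :=
  {f | ∃ g ∈ G, ∃ m, IsLM po g m ∧ f = monomial m (1 : K)}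

/-- The initial ideal of `I` with respect to the lexicographic order induced by `po`. -/
noncomputable def initialIdeal {K : Type*} [Field K] (po : Pt → Pt → Prop)
    (I : Ideal (MvPolynomial Pt K)) : Ideal (MvPolynomial Pt K) :=
  Ideal.span (leadingMonomials po (I : Set (MvPolynomial Pt K)))

/-- `G` is a Gröbner basis of `I`. -/
def IsGroebnerBasis {K : Type*} [Field K] (po : Pt → Pt → Prop)
    (G : Set (MvPolynomial Pt K)) (I : Ideal (MvPolynomial Pt K)) : Prop :=
  Ideal.span G = I ∧ Ideal.span (leadingMonomials po G) = initialIdeal po I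

/-- `G` is the reduced Gröbner basis of `I` (up to normalizing signs). -/
def IsReducedGroebnerBasis {K : Type*} [Field K] (po : Pt → Pt → Prop)
    (G : Set (MvPolynomial Pt K)) (I : Ideal (MvPolynomial Pt K)) : Prop :=
  IsGroebnerBasis po G I ∧
  (∀ g ∈ G, ∃ m, IsLM po g m ∧ (g.coeff m = 1 ∨ g.coeff m = -1)) ∧
  (∀ g ∈ G, ∀ g' ∈ G, g' ≠ g → ∀ m ∈ g.support, ∀ m', IsLM po g' m' → ¬ m' ≤ m)

/-! ### Closed paths and special configurations -/

/-- Two cells share a common edge. -/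
def cellAdj (a b : Pt) : Prop :=
  b = (a.1 + 1, a.2) ∨ b = (a.1 - 1, a.2) ∨ b = (a.1, a.2 + 1) ∨ b = (a.1, a.2 - 1)

/-- `P` is a closed path polyomino. -/
def IsClosedPath (P : Finset Pt) : Prop :=
  ∃ n : ℕ, 5 < n ∧ ∃ A : ZMod n → Pt,
    Function.Injective A ∧
    (∀ i, cellAdj (A i) (A (i + 1))) ∧
    (∀ i j : ZMod n, j ≠ i - 2 → j ≠ i - 1 → j ≠ i → j ≠ i + 1 → j ≠ i + 2 →
      cellVerts (A i) ∩ cellVerts (A j) = ∅) ∧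
    ∀ c : Pt, c ∈ P ↔ ∃ i, A i = c

/-- The horizontal block of rank `m` whose leftmost cell is `a`. -/
def hBlockCells (a : Pt) (m : ℕ) : Finset Pt :=
  (Finset.range m).image fun t : ℕ => (a.1 + (t : ℤ), a.2)

/-- The vertical block of rank `m` whose bottom cell is `a`. -/
def vBlockCells (a : Pt) (m : ℕ) : Finset Pt :=
  (Finset.range m).image fun t : ℕ => (a.1, a.2 + (t : ℤ))

/-- The vertex set of a finite set of cells. -/
def vertsOfCells (s : Finset Pt) : Set Pt := ⋃ c ∈ s, cellVerts c

/-- A W-pentomino of `P`: a horizontal block of rank two with leftmost cell `a₁`, a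
vertical block of rank two with bottom cell `a₂`, and a middle cell `A` not belonging to the
two blocks, such that the vertex sets of the two blocks meet exactly in the lower right
corner of `A`. -/
def IsWPentomino (P : Finset Pt) (a₁ a₂ A : Pt) : Prop :=
  hBlockCells a₁ 2 ⊆ P ∧ vBlockCells a₂ 2 ⊆ P ∧ A ∈ P ∧
  A ∉ hBlockCells a₁ 2 ∪ vBlockCells a₂ 2 ∧
  vertsOfCells (hBlockCells a₁ 2) ∩ vertsOfCells (vBlockCells a₂ 2) = {(A.1 + 1, A.2)}

/-- An RW-heptomino of `P`: a horizontal block of rank three with leftmost cell `a₁`, a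
vertical block of rank three with bottom cell `a₂`, and a middle cell `A` not belonging to
the two blocks, such that the vertex sets of the two blocks meet exactly in the upper left
corner of `A`. -/
def IsRWHeptomino (P : Finset Pt) (a₁ a₂ A : Pt) : Prop :=
  hBlockCells a₁ 3 ⊆ P ∧ vBlockCells a₂ 3 ⊆ P ∧ A ∈ P ∧
  A ∉ hBlockCells a₁ 3 ∪ vBlockCells a₂ 3 ∧
  vertsOfCells (hBlockCells a₁ 3) ∩ vertsOfCells (vBlockCells a₂ 3) = {(A.1, A.2 + 1)}

/-- An LD-horizontal skew tetromino of `P` (base point `p`): the cells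
`p, p+(1,0), p+(1,1), p+(2,1)`. -/
def IsLDhTetromino (P : Finset Pt) (p : Pt) : Prop :=
  p ∈ P ∧ (p.1 + 1, p.2) ∈ P ∧ (p.1 + 1, p.2 + 1) ∈ P ∧ (p.1 + 2, p.2 + 1) ∈ P

/-- An LD-vertical skew tetromino of `P` (base point `p`): the cells
`p, p+(0,1), p+(1,1), p+(1,2)`. -/
def IsLDvTetromino (P : Finset Pt) (p : Pt) : Prop :=
  p ∈ P ∧ (p.1, p.2 + 1) ∈ P ∧ (p.1 + 1, p.2 + 1) ∈ P ∧ (p.1 + 1, p.2 + 2) ∈ P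

/-- An LD-horizontal skew hexomino of `P` (base point `p`): the cells
`p, p+(1,0), p+(2,0), p+(2,1), p+(3,1), p+(4,1)`. -/
def IsLDhHexomino (P : Finset Pt) (p : Pt) : Prop :=
  p ∈ P ∧ (p.1 + 1, p.2) ∈ P ∧ (p.1 + 2, p.2) ∈ P ∧
  (p.1 + 2, p.2 + 1) ∈ P ∧ (p.1 + 3, p.2 + 1) ∈ P ∧ (p.1 + 4, p.2 + 1) ∈ P

/-- An LD-vertical skew hexomino of `P` (base point `p`): the cells
`p, p+(0,1), p+(0,2), p+(1,2), p+(1,3), p+(1,4)`. -/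
def IsLDvHexomino (P : Finset Pt) (p : Pt) : Prop :=
  p ∈ P ∧ (p.1, p.2 + 1) ∈ P ∧ (p.1, p.2 + 2) ∈ P ∧
  (p.1 + 1, p.2 + 2) ∈ P ∧ (p.1 + 1, p.2 + 3) ∈ P ∧ (p.1 + 1, p.2 + 4) ∈ P

/-- The total order `<¹` on `ℤ²`. -/
def lt1 (a b : Pt) : Prop := a.1 < b.1 ∨ (a.1 = b.1 ∧ a.2 < b.2)

/-- The P-order `<^Y` attached to a set `Y` of vertices. -/
def Ylt (Y : Set Pt) (a b : Pt) : Prop :=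
  (a ∉ Y ∧ b ∈ Y) ∨ (a ∉ Y ∧ b ∉ Y ∧ lt1 a b) ∨ (a ∈ Y ∧ b ∈ Y ∧ lt1 a b)

/-!
The leading terms of `f_{a,b}` and `f_{α,β}` can only share the variable `x_b`, so they are
`x_a x_b` and `x_b x_δ`, and the S-polynomial is the binomial `x_a x_α x_β - x_δ x_c x_d`.
If a polynomial has a standard expression, its leading monomial is divisible by the leading
monomial of some inner minor. Running through the proper intervals whose diagonal or
anti-diagonal corners are among the three variables of that monomial leaves only `f_{d,δ}` and
`f_{h,β}` when `x_δ x_c x_d` leads, and `f_{a,α}` and `f_{a,β}` when `x_a x_α x_β` leads, each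
with its own order condition. Conversely, the S-polynomial telescopes as
`x_β f_{a,α} + x_d f_{h,β}` or as `x_α f_{a,β} - x_c f_{d,δ}`, and this is a standard
expression exactly when the middle monomial is below the leading one.
-/

/-- `lexLt po` compares two exponent vectors at the `po`-largest variable where they differ,
so it is Mathlib's colex order for the linear order `po` on the variables. -/
def OrderedBy (_po : Pt → Pt → Prop) : Type := Pt

noncomputable instance (po : Pt → Pt → Prop) [IsStrictTotalOrder Pt po] :
    LinearOrder (OrderedBy po) := by
  classical exact (linearOrderOfSTO po : LinearOrder Pt)

def toColexBy (po : Pt → Pt → Prop) (u : Pt →₀ ℕ) : Colex (OrderedBy po →₀ ℕ) := toColex u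

section LexOrder

variable {po : Pt → Pt → Prop} {u v : Pt →₀ ℕ}

theorem toColexBy_injective : Function.Injective (toColexBy po) := toColex.injective

theorem toColexBy_add (u v : Pt →₀ ℕ) :
    toColexBy po (u + v) = toColexBy po u + toColexBy po v := rfl

variable [IsStrictTotalOrder Pt po]

theorem lexLt_iff_toColexBy_lt : lexLt po u v ↔ toColexBy po u < toColexBy po v :=
  exists_congr fun _ => ⟨fun h => ⟨h.2, h.1⟩, fun h => ⟨h.2, h.1⟩⟩

theorem lexLe_iff_toColexBy_le : lexLe po u v ↔ toColexBy po u ≤ toColexBy po v := by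
  rw [lexLe, lexLt_iff_toColexBy_lt, le_iff_eq_or_lt, toColexBy_injective.eq_iff]

theorem lexLt_or_lexLt_of_ne (h : u ≠ v) : lexLt po u v ∨ lexLt po v u := by
  simp only [lexLt_iff_toColexBy_lt]
  exact lt_or_gt_of_ne (toColexBy_injective.ne h)

end LexOrder

section LeadingMonomial

variable {K : Type*} [Field K] {po : Pt → Pt → Prop} [IsStrictTotalOrder Pt po]
  {f g q : MvPolynomial Pt K} {m m' M N : Pt →₀ ℕ}

theorem IsLM.toColexBy_le (hf : IsLM po f m) (hm' : m' ∈ f.support) :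
    toColexBy po m' ≤ toColexBy po m :=
  lexLe_iff_toColexBy_le.1 (hf.2 m' hm')

theorem IsLM.unique (h : IsLM po f m) (h' : IsLM po f m') : m = m' :=
  toColexBy_injective (le_antisymm (h'.toColexBy_le h.1) (h.toColexBy_le h'.1))

theorem exists_isLM (hf : f ≠ 0) : ∃ m, IsLM po f m := by
  obtain ⟨m, hm, hmax⟩ := f.support.exists_max_image (toColexBy po) (support_nonempty.2 hf)
  exact ⟨m, hm, fun m' hm' => lexLe_iff_toColexBy_le.2 (hmax m' hm')⟩

theorem IsLM.mul (hq : IsLM po q M) (hg : IsLM po g N) : IsLM po (q * g) (M + N) := by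
  have hcoeff : (q * g).coeff (M + N) = q.coeff M * g.coeff N := by
    classical
    rw [coeff_mul, Finset.sum_eq_single (M, N) _ (by simp)]
    rintro ⟨c, d⟩ hcd hne
    by_contra h0
    obtain ⟨hc, hd⟩ := ne_zero_and_ne_zero_of_mul h0
    have hsum : toColexBy po c + toColexBy po d = toColexBy po M + toColexBy po N := by
      rw [← toColexBy_add, ← toColexBy_add, Finset.HasAntidiagonal.mem_antidiagonal.1 hcd]
    obtain ⟨hcM, hdN⟩ := (add_eq_add_iff_eq_and_eq (hq.toColexBy_le (mem_support_iff.2 hc))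
      (hg.toColexBy_le (mem_support_iff.2 hd))).1 hsum
    exact hne (Prod.ext (toColexBy_injective hcM) (toColexBy_injective hdN))
  refine ⟨?_, fun m hm => ?_⟩
  · rw [mem_support_iff, hcoeff]
    exact mul_ne_zero (mem_support_iff.1 hq.1) (mem_support_iff.1 hg.1)
  · obtain ⟨c, hc, d, hd, rfl⟩ := Finset.mem_add.1 (support_mul q g hm)
    rw [lexLe_iff_toColexBy_le, toColexBy_add, toColexBy_add]
    exact add_le_add (hq.toColexBy_le hc) (hg.toColexBy_le hd)

theorem IsSPoly.unique {sp sp' : MvPolynomial Pt K} (h : IsSPoly po f g sp)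
    (h' : IsSPoly po f g sp') : sp = sp' := by
  obtain ⟨mf, mg, hmf, hmg, rfl⟩ := h
  obtain ⟨mf', mg', hmf', hmg', rfl⟩ := h'
  rw [hmf.unique hmf', hmg.unique hmg']

theorem support_monomial_sub_monomial (h : M ≠ N) :
    (monomial M (1 : K) - monomial N 1).support = {M, N} := by
  classical
  ext m
  rw [mem_support_iff, coeff_sub, coeff_monomial, coeff_monomial, Finset.mem_insert,
    Finset.mem_singleton]
  by_cases hM : M = m <;> by_cases hN : N = m <;> simp_all [eq_comm]

theorem support_monomial_sub_monomial_subset (A B : Pt →₀ ℕ) :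
    (monomial A (1 : K) - monomial B 1).support ⊆ {A, B} := by
  rcases eq_or_ne A B with rfl | h
  · simp
  · exact (support_monomial_sub_monomial h).le

theorem isLM_monomial_sub_monomial_iff :
    IsLM po (monomial M (1 : K) - monomial N 1) m ↔
      (m = M ∧ lexLt po N M) ∨ (m = N ∧ lexLt po M N) := by
  rcases eq_or_ne M N with rfl | hMN
  · simp [IsLM, lexLt_iff_toColexBy_lt]
  simp only [IsLM, support_monomial_sub_monomial hMN, Finset.mem_insert, Finset.mem_singleton,
    forall_eq_or_imp, forall_eq, lexLe_iff_toColexBy_le, lexLt_iff_toColexBy_lt]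
  have hMN' : toColexBy po M ≠ toColexBy po N := toColexBy_injective.ne hMN
  constructor
  · rintro ⟨rfl | rfl, h1, h2⟩
    · exact Or.inl ⟨rfl, lt_of_le_of_ne h2 hMN'.symm⟩
    · exact Or.inr ⟨rfl, lt_of_le_of_ne h1 hMN'⟩
  · rintro (⟨rfl, h⟩ | ⟨rfl, h⟩)
    · exact ⟨Or.inl rfl, le_rfl, h.le⟩
    · exact ⟨Or.inr rfl, h.le, le_rfl⟩

end LeadingMonomial

section Reduction

variable {K : Type*} [Field K] {po : Pt → Pt → Prop}
  {G : Set (MvPolynomial Pt K)} {f g₁ g₂ q₁ q₂ : MvPolynomial Pt K} {M : Pt →₀ ℕ}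

theorem reducesToZero_mul_add_mul (hg₁ : g₁ ∈ G) (hg₂ : g₂ ∈ G)
    (hM : IsLM po (q₁ * g₁ + q₂ * g₂) M)
    (h₁ : ∀ m ∈ (q₁ * g₁).support, lexLe po m M) (h₂ : ∀ m ∈ (q₂ * g₂).support, lexLe po m M) :
    ReducesToZero po G (q₁ * g₁ + q₂ * g₂) := by
  classical
  by_cases hg : g₁ = g₂
  · subst hg
    refine ⟨{g₁}, fun _ => q₁ + q₂, by simpa using hg₁, by simp [add_mul], ?_⟩
    simp only [Finset.mem_singleton, forall_eq, add_mul]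
    exact fun m hm => ⟨M, hM, hM.2 m hm.1⟩
  · refine ⟨{g₁, g₂}, fun g => if g = g₁ then q₁ else q₂, ?_, ?_, ?_⟩
    · simp [Set.insert_subset_iff, hg₁, hg₂]
    · simp [Finset.sum_pair hg, Ne.symm hg]
    · simp only [Finset.mem_insert, Finset.mem_singleton]
      rintro g (rfl | rfl) m hm
      · exact ⟨M, hM, h₁ m (by simpa using hm.1)⟩
      · exact ⟨M, hM, h₂ m (by simpa [Ne.symm hg] using hm.1)⟩

variable [IsStrictTotalOrder Pt po]

theorem ReducesToZero.exists_isLM_le (hred : ReducesToZero po G f) (hM : IsLM po f M) :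
    ∃ g ∈ G, ∃ m, IsLM po g m ∧ m ≤ M := by
  obtain ⟨F, q, hFG, rfl, hstd⟩ := hred
  obtain ⟨g, hgF, hgM⟩ : ∃ g ∈ F, (q g * g).coeff M ≠ 0 := by
    by_contra! h
    exact mem_support_iff.1 hM.1 (by rw [coeff_sum]; exact Finset.sum_eq_zero h)
  have hqg : q g * g ≠ 0 := by rintro h; simp [h] at hgM
  obtain ⟨Q, hQ⟩ := exists_isLM (po := po) (left_ne_zero_of_mul hqg)
  obtain ⟨m, hm⟩ := exists_isLM (po := po) (right_ne_zero_of_mul hqg)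
  obtain ⟨M', hM', hle⟩ := hstd g hgF _ (hQ.mul hm)
  rw [hM'.unique hM, lexLe_iff_toColexBy_le] at hle
  have hQm : Q + m = M := toColexBy_injective <|
    le_antisymm hle ((hQ.mul hm).toColexBy_le (mem_support_iff.2 hgM))
  exact ⟨g, hFG hgF, m, hm, hQm ▸ le_add_self⟩

theorem reducesToZero_of_telescope {U V W : Pt →₀ ℕ} (hg₁ : g₁ ∈ G) (hg₂ : g₂ ∈ G)
    (h₁ : q₁ * g₁ = monomial U 1 - monomial W 1) (h₂ : q₂ * g₂ = monomial W 1 - monomial V 1)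
    (hM : IsLM po (monomial U (1 : K) - monomial V 1) M) (hW : lexLt po W M) :
    ReducesToZero po G (monomial U (1 : K) - monomial V 1) := by
  have hU : lexLe po U M := by
    rcases isLM_monomial_sub_monomial_iff.1 hM with ⟨rfl, -⟩ | ⟨rfl, h⟩
    exacts [Or.inl rfl, Or.inr h]
  have hV : lexLe po V M := by
    rcases isLM_monomial_sub_monomial_iff.1 hM with ⟨rfl, h⟩ | ⟨rfl, -⟩
    exacts [Or.inr h, Or.inl rfl]
  have hsum : monomial U (1 : K) - monomial V 1 = q₁ * g₁ + q₂ * g₂ := by rw [h₁, h₂]; ring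
  rw [hsum] at hM ⊢
  refine reducesToZero_mul_add_mul hg₁ hg₂ hM (fun m hm => ?_) (fun m hm => ?_)
  · rw [h₁] at hm
    have hm := support_monomial_sub_monomial_subset U W hm
    simp only [Finset.mem_insert, Finset.mem_singleton] at hm
    rcases hm with rfl | rfl
    exacts [hU, Or.inr hW]
  · rw [h₂] at hm
    have hm := support_monomial_sub_monomial_subset W V hm
    simp only [Finset.mem_insert, Finset.mem_singleton] at hm
    rcases hm with rfl | rfl
    exacts [Or.inr hW, hV]

end Reduction

noncomputable def mono2 (s t : Pt) : Pt →₀ ℕ := Finsupp.single s 1 + Finsupp.single t 1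

section PointMonomials

variable {po : Pt → Pt → Prop} {s t u v w x y z : Pt}

theorem mono2_comm (s t : Pt) : mono2 s t = mono2 t s := add_comm _ _

theorem mono3_swap_left (u v w : Pt) : mono3 u v w = mono3 v u w := by
  simp only [mono3, add_comm (Finsupp.single u 1)]

theorem mono3_swap_right (u v w : Pt) : mono3 u v w = mono3 u w v := by
  simp only [mono3, add_right_comm _ (Finsupp.single v 1)]

theorem monomial_mono2 (K : Type*) [Field K] (s t : Pt) :
    monomial (mono2 s t) (1 : K) = X s * X t := by
  rw [mono2, X, X, monomial_mul, one_mul]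

theorem mono3_eq_mono2_add (u v w : Pt) : mono3 u v w = mono2 u v + Finsupp.single w 1 := rfl

theorem monomial_mono3 (K : Type*) [Field K] (u v w : Pt) :
    monomial (mono3 u v w) (1 : K) = X u * X v * X w := by
  rw [mono3_eq_mono2_add, ← monomial_mono2, X, monomial_mul, one_mul]

theorem mono2_sup_mono2 (huv : u ≠ v) (huw : u ≠ w) (hvw : v ≠ w) :
    mono2 u v ⊔ mono2 v w = mono3 u v w := by
  ext x
  simp only [mono2, mono3, Finsupp.sup_apply, Finsupp.add_apply, Finsupp.single_apply]
  split_ifs <;> simp_all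

theorem mono3_tsub_mono2_left (u v w : Pt) : mono3 u v w - mono2 u v = Finsupp.single w 1 :=
  add_tsub_cancel_left _ _

theorem mono3_tsub_mono2_right (u v w : Pt) : mono3 u v w - mono2 v w = Finsupp.single u 1 := by
  rw [mono3, add_assoc, ← mono2, add_tsub_cancel_right]

theorem eq_or_eq_of_mono2_pos (h : 0 < mono2 s t w) : w = s ∨ w = t := by
  simp only [mono2, Finsupp.add_apply, Finsupp.single_apply] at h
  split_ifs at h <;> simp_all [eq_comm]

theorem eq_or_eq_or_eq_of_mono3_pos (h : 0 < mono3 x y z w) : w = x ∨ w = y ∨ w = z := by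
  simp only [mono3, Finsupp.add_apply, Finsupp.single_apply] at h
  split_ifs at h <;> simp_all [eq_comm]

theorem mem_of_mono2_le_mono3 (h : mono2 s t ≤ mono3 x y z) :
    (s = x ∨ s = y ∨ s = z) ∧ (t = x ∨ t = y ∨ t = z) :=
  ⟨eq_or_eq_or_eq_of_mono3_pos ((h s).trans_lt' (by simp [mono2])),
    eq_or_eq_or_eq_of_mono3_pos ((h t).trans_lt' (by simp [mono2]))⟩

theorem mono2_ne_mono2 (hsx : s ≠ x) (hsy : s ≠ y) : mono2 s t ≠ mono2 x y := fun h =>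
  (eq_or_eq_of_mono2_pos (h ▸ (by simp [mono2]) : 0 < mono2 x y s)).elim hsx hsy

variable [IsStrictTotalOrder Pt po]

theorem lexLt_mono2_mono2_of_po (hs : po s x) (ht : po t x) (hxy : ¬ po x y) :
    lexLt po (mono2 s t) (mono2 x y) := by
  refine ⟨x, ?_, fun w hw => ?_⟩
  · simp [mono2, Finsupp.single_apply, ne_of_irrefl hs, ne_of_irrefl ht]
  · have hsw : s ≠ w := by rintro rfl; exact asymm hs hw
    have htw : t ≠ w := by rintro rfl; exact asymm ht hw
    have hxw : x ≠ w := by rintro rfl; exact irrefl x hw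
    have hyw : y ≠ w := by rintro rfl; exact hxy hw
    simp [mono2, hsw, htw, hxw, hyw]

theorem lexLt_mono2_mono2_iff (hsx : s ≠ x) (hsy : s ≠ y) (htx : t ≠ x) (hty : t ≠ y) :
    lexLt po (mono2 s t) (mono2 x y) ↔ (po s x ∧ po t x) ∨ (po s y ∧ po t y) := by
  constructor
  · rintro ⟨w, hw, heq⟩
    have hwxy := eq_or_eq_of_mono2_pos (hw.trans_le' (Nat.zero_le _))
    have key : ∀ z, z ≠ x → z ≠ y → 0 < mono2 s t z → po z w := fun z hzx hzy hz => by
      rcases trichotomous_of po z w with h | rfl | h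
      · exact h
      · rcases hwxy with rfl | rfl <;> contradiction
      · have h0 : mono2 x y z = 0 :=
          Nat.eq_zero_of_not_pos fun h => (eq_or_eq_of_mono2_pos h).elim hzx hzy
        have := heq z h
        omega
    have hs := key s hsx hsy (by simp [mono2])
    have ht := key t htx hty (by simp [mono2])
    rcases hwxy with rfl | rfl
    exacts [Or.inl ⟨hs, ht⟩, Or.inr ⟨hs, ht⟩]
  · rintro (⟨hs, ht⟩ | ⟨hs, ht⟩)
    · by_cases hxy : po x y
      · rw [mono2_comm x y]
        exact lexLt_mono2_mono2_of_po (_root_.trans hs hxy) (_root_.trans ht hxy) (asymm hxy)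
      · exact lexLt_mono2_mono2_of_po hs ht hxy
    · by_cases hyx : po y x
      · exact lexLt_mono2_mono2_of_po (_root_.trans hs hyx) (_root_.trans ht hyx) (asymm hyx)
      · rw [mono2_comm x y]
        exact lexLt_mono2_mono2_of_po hs ht hyx

theorem lexLt_mono3_mono3_iff :
    lexLt po (mono3 s t z) (mono3 x y z) ↔ lexLt po (mono2 s t) (mono2 x y) := by
  simp only [lexLt_iff_toColexBy_lt, mono3_eq_mono2_add, toColexBy_add, add_lt_add_iff_right]

end PointMonomials

section Intervals

variable {K : Type*} [Field K] {po : Pt → Pt → Prop} {P : Finset Pt} {a b u v : Pt}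

theorem innerMinor_eq_monomial_sub (a b : Pt) :
    innerMinor K a b = monomial (mono2 a b) 1 - monomial (mono2 (a.1, b.2) (b.1, a.2)) 1 := by
  rw [innerMinor, monomial_mono2, monomial_mono2]

theorem isLM_innerMinor_iff [IsStrictTotalOrder Pt po] {m : Pt →₀ ℕ} :
    IsLM po (innerMinor K a b) m ↔
      (m = mono2 a b ∧ lexLt po (mono2 (a.1, b.2) (b.1, a.2)) (mono2 a b)) ∨
      (m = mono2 (a.1, b.2) (b.1, a.2) ∧ lexLt po (mono2 a b) (mono2 (a.1, b.2) (b.1, a.2))) := by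
  rw [innerMinor_eq_monomial_sub, isLM_monomial_sub_monomial_iff]

theorem coeff_innerMinor (hab₁ : a.1 < b.1) (hab₂ : a.2 < b.2) :
    (innerMinor K a b).coeff (mono2 a b) = 1 ∧
      (innerMinor K a b).coeff (mono2 (a.1, b.2) (b.1, a.2)) = -1 := by
  have hne : mono2 a b ≠ mono2 (a.1, b.2) (b.1, a.2) :=
    mono2_ne_mono2 (by simp [Prod.ext_iff]; omega) (by simp [Prod.ext_iff]; omega)
  simp [innerMinor_eq_monomial_sub, coeff_monomial, hne, hne.symm]

theorem IsInnerInterval.mono (h : IsInnerInterval P a b) (hu₁ : a.1 ≤ u.1) (hu₂ : a.2 ≤ u.2)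
    (hv₁ : v.1 ≤ b.1) (hv₂ : v.2 ≤ b.2) (huv₁ : u.1 < v.1) (huv₂ : u.2 < v.2) :
    IsInnerInterval P u v :=
  ⟨huv₁, huv₂, fun c hc₁ hc₂ hc₃ hc₄ => h.2.2 c (by omega) (by omega) (by omega) (by omega)⟩

theorem IsInnerInterval.union_horizontal {i j k l p : ℤ} (h₁ : IsInnerInterval P (i, j) (k, l))
    (h₂ : IsInnerInterval P (k, j) (p, l)) : IsInnerInterval P (i, j) (p, l) :=
  ⟨h₁.1.trans h₂.1, h₁.2.1, fun c hc₁ hc₂ hc₃ hc₄ =>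
    if hck : c.1 < k then h₁.2.2 c hc₁ hck hc₃ hc₄ else h₂.2.2 c (not_lt.1 hck) hc₂ hc₃ hc₄⟩

theorem IsInnerInterval.union_vertical {i j k l n : ℤ} (h₁ : IsInnerInterval P (i, j) (k, n))
    (h₂ : IsInnerInterval P (i, n) (k, l)) : IsInnerInterval P (i, j) (k, l) :=
  ⟨h₁.1, h₁.2.1.trans h₂.2.1, fun c hc₁ hc₂ hc₃ hc₄ =>
    if hcn : c.2 < n then h₁.2.2 c hc₁ hc₂ hc₃ hcn else h₂.2.2 c hc₁ hc₂ (not_lt.1 hcn) hc₄⟩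

theorem eq_of_cornersOf_eq (hab₁ : a.1 < b.1) (hab₂ : a.2 < b.2) (huv₁ : u.1 < v.1)
    (huv₂ : u.2 < v.2) (h : cornersOf u v = cornersOf a b) : u = a ∧ v = b := by
  have hu : u ∈ cornersOf a b := h ▸ by simp [cornersOf]
  have hv : v ∈ cornersOf a b := h ▸ by simp [cornersOf]
  simp only [cornersOf, Finset.mem_insert, Finset.mem_singleton, Prod.ext_iff] at hu hv ⊢
  omega

theorem exists_cornersOf_eq_iff (hab₁ : a.1 < b.1) (hab₂ : a.2 < b.2) :
    (∃ u v, IsInnerInterval P u v ∧ cornersOf u v = cornersOf a b) ↔ IsInnerInterval P a b := by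
  refine ⟨fun ⟨u, v, huv, h⟩ => ?_, fun h => ⟨a, b, h, rfl⟩⟩
  obtain ⟨rfl, rfl⟩ := eq_of_cornersOf_eq hab₁ hab₂ huv.1 huv.2.1 h
  exact huv

end Intervals

section Configuration

variable {K : Type*} [Field K] {po : Pt → Pt → Prop} [IsStrictTotalOrder Pt po] {P : Finset Pt}
  {i j k l n p : ℤ} {a' b' : Pt} {m M : Pt →₀ ℕ}

/- The configuration has a = (i,j), b = (k,l), c = (i,l), d = (k,j), α = (k,n), β = (p,l),
δ = (p,n), h = (i,n), r = (p,j). -/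

theorem isLM_innerMinors_of_common_variable (hik : i < k) (hjn : j < n) (hnl : n < l)
    (hkp : k < p)
    (hgcd : ∃ mf mg : Pt →₀ ℕ, IsLM po (innerMinor K (i, j) (k, l)) mf ∧
      IsLM po (innerMinor K (k, n) (p, l)) mg ∧ ∃ w, 0 < mf w ∧ 0 < mg w) :
    IsLM po (innerMinor K (i, j) (k, l)) (mono2 (i, j) (k, l)) ∧
      IsLM po (innerMinor K (k, n) (p, l)) (mono2 (k, l) (p, n)) := by
  obtain ⟨mf, mg, hmf, hmg, w, hwf, hwg⟩ := hgcd
  have hf := isLM_innerMinor_iff.1 hmf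
  have hg := isLM_innerMinor_iff.1 hmg
  rcases hf with ⟨rfl, -⟩ | ⟨rfl, -⟩ <;> rcases hg with ⟨rfl, -⟩ | ⟨rfl, -⟩
  all_goals first
    | exact ⟨hmf, hmg⟩
    | have hwf := eq_or_eq_of_mono2_pos hwf
      have hwg := eq_or_eq_of_mono2_pos hwg
      simp only [Prod.ext_iff] at hwf hwg
      omega

theorem isSPoly_innerMinor_iff (hik : i < k) (hjn : j < n) (hnl : n < l) (hkp : k < p)
    (h₁ : IsLM po (innerMinor K (i, j) (k, l)) (mono2 (i, j) (k, l)))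
    (h₂ : IsLM po (innerMinor K (k, n) (p, l)) (mono2 (k, l) (p, n)))
    {sp : MvPolynomial Pt K} :
    IsSPoly po (innerMinor K (i, j) (k, l)) (innerMinor K (k, n) (p, l)) sp ↔
      sp = monomial (mono3 (i, j) (k, n) (p, l)) 1 - monomial (mono3 (p, n) (i, l) (k, j)) 1 := by
  have hS : IsSPoly po (innerMinor K (i, j) (k, l)) (innerMinor K (k, n) (p, l))
      (monomial (mono3 (i, j) (k, n) (p, l)) 1 - monomial (mono3 (p, n) (i, l) (k, j)) 1) := by
    refine ⟨_, _, h₁, h₂, ?_⟩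
    have hc₂ : (innerMinor K (k, n) (p, l)).coeff (mono2 (k, l) (p, n)) = -1 :=
      (coeff_innerMinor hkp hnl).2
    rw [mono2_sup_mono2 (by simp; omega) (by simp; omega) (by simp; omega),
      mono3_tsub_mono2_left, mono3_tsub_mono2_right, (coeff_innerMinor hik (hjn.trans hnl)).1, hc₂,
      monomial_mono3,
      monomial_mono3, innerMinor, innerMinor, ← C_mul_X_eq_monomial, ← C_mul_X_eq_monomial]
    simp only [inv_one, inv_neg, map_one, map_neg]
    ring
  exact ⟨fun h => h.unique hS, fun h => h ▸ hS⟩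

theorem lexLt_cases_of_isLM_le_δcd (hik : i < k) (hjn : j < n) (hnl : n < l) (hkp : k < p)
    (h₁ : IsLM po (innerMinor K (i, j) (k, l)) (mono2 (i, j) (k, l)))
    (hg : IsInnerInterval P a' b') (hm : IsLM po (innerMinor K a' b') m)
    (hle : m ≤ mono3 (p, n) (i, l) (k, j)) :
    lexLt po (mono2 (i, n) (p, l)) (mono2 (i, l) (p, n)) ∨
      (IsInnerInterval P (k, j) (p, n) ∧ lexLt po (mono2 (p, j) (k, n)) (mono2 (p, n) (k, j))) := by
  have hg₁ := hg.1
  have hg₂ := hg.2.1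
  rcases isLM_innerMinor_iff.1 hm with ⟨rfl, hlt⟩ | ⟨rfl, hlt⟩
  · obtain ⟨ha', hb'⟩ := mem_of_mono2_le_mono3 hle
    obtain ⟨rfl, rfl⟩ : a' = (k, j) ∧ b' = (p, n) := by
      simp only [Prod.ext_iff] at ha' hb' ⊢
      omega
    rw [mono2_comm (p, j), mono2_comm (p, n)]
    exact Or.inr ⟨hg, hlt⟩
  · obtain ⟨hc', hd'⟩ := mem_of_mono2_le_mono3 hle
    obtain ⟨rfl, rfl⟩ | ⟨rfl, rfl⟩ : (a' = (i, n) ∧ b' = (p, l)) ∨ (a' = (i, j) ∧ b' = (k, l)) := by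
      simp only [Prod.ext_iff] at hc' hd' ⊢
      omega
    · exact Or.inl hlt
    · exact absurd (hm.unique h₁)
        (mono2_ne_mono2 (by simp only [ne_eq, Prod.mk.injEq]; omega)
          (by simp only [ne_eq, Prod.mk.injEq]; omega))

theorem lexLt_cases_of_isLM_le_aαβ (hik : i < k) (hjn : j < n) (hnl : n < l) (hkp : k < p)
    (h₂ : IsLM po (innerMinor K (k, n) (p, l)) (mono2 (k, l) (p, n)))
    (hg : IsInnerInterval P a' b') (hm : IsLM po (innerMinor K a' b') m)
    (hle : m ≤ mono3 (i, j) (k, n) (p, l)) :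
    lexLt po (mono2 (i, n) (k, j)) (mono2 (i, j) (k, n)) ∨
      (IsInnerInterval P (k, j) (p, n) ∧ lexLt po (mono2 (p, j) (i, l)) (mono2 (i, j) (p, l))) := by
  have hg₁ := hg.1
  have hg₂ := hg.2.1
  rcases isLM_innerMinor_iff.1 hm with ⟨rfl, hlt⟩ | ⟨rfl, -⟩
  · obtain ⟨ha', hb'⟩ := mem_of_mono2_le_mono3 hle
    obtain ⟨rfl, rfl⟩ | ⟨rfl, rfl⟩ | ⟨rfl, rfl⟩ :
        (a' = (i, j) ∧ b' = (k, n)) ∨ (a' = (i, j) ∧ b' = (p, l)) ∨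
          (a' = (k, n) ∧ b' = (p, l)) := by
      simp only [Prod.ext_iff] at ha' hb' ⊢
      omega
    · exact Or.inl hlt
    · rw [mono2_comm (p, j)]
      exact Or.inr ⟨hg.mono hik.le le_rfl le_rfl hnl.le hkp hjn, hlt⟩
    · exact absurd (hm.unique h₂)
        (mono2_ne_mono2 (by simp only [ne_eq, Prod.mk.injEq]; omega)
          (by simp only [ne_eq, Prod.mk.injEq]; omega))
  · obtain ⟨hc', hd'⟩ := mem_of_mono2_le_mono3 hle
    simp only [Prod.ext_iff] at hc' hd'
    omega

theorem reducesToZero_sPoly_via_hβ (hab : IsInnerInterval P (i, j) (k, l))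
    (hαβ : IsInnerInterval P (k, n) (p, l)) (hjn : j < n) (hnl : n < l)
    (hM : IsLM po (monomial (mono3 (i, j) (k, n) (p, l)) (1 : K) -
      monomial (mono3 (p, n) (i, l) (k, j)) 1) M)
    (hW : lexLt po (mono3 (i, n) (k, j) (p, l)) M) :
    ReducesToZero po (minorsSet K P)
      (monomial (mono3 (i, j) (k, n) (p, l)) 1 - monomial (mono3 (p, n) (i, l) (k, j)) 1) :=
  reducesToZero_of_telescope (q₁ := X (p, l)) (q₂ := X (k, j))
    ⟨(i, j), (k, n), hab.mono (v := (k, n)) le_rfl le_rfl le_rfl hnl.le hab.1 hjn, rfl⟩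
    ⟨(i, n), (p, l),
      (hab.mono (u := (i, n)) le_rfl hjn.le le_rfl le_rfl hab.1 hnl).union_horizontal hαβ, rfl⟩
    (by simp only [innerMinor, monomial_mono3]; ring)
    (by simp only [innerMinor, monomial_mono3]; ring) hM hW

theorem reducesToZero_sPoly_via_dδ (hab : IsInnerInterval P (i, j) (k, l))
    (hαβ : IsInnerInterval P (k, n) (p, l)) (hdδ : IsInnerInterval P (k, j) (p, n))
    (hM : IsLM po (monomial (mono3 (i, j) (k, n) (p, l)) (1 : K) -
      monomial (mono3 (p, n) (i, l) (k, j)) 1) M)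
    (hW : lexLt po (mono3 (i, l) (k, n) (p, j)) M) :
    ReducesToZero po (minorsSet K P)
      (monomial (mono3 (i, j) (k, n) (p, l)) 1 - monomial (mono3 (p, n) (i, l) (k, j)) 1) :=
  reducesToZero_of_telescope (q₁ := X (k, n)) (q₂ := -X (i, l))
    ⟨(i, j), (p, l), hab.union_horizontal (hdδ.union_vertical hαβ), rfl⟩
    ⟨(k, j), (p, n), hdδ, rfl⟩
    (by simp only [innerMinor, monomial_mono3]; ring)
    (by simp only [innerMinor, monomial_mono3]; ring) hM hW

theorem reducesToZero_sPoly_iff (hab : IsInnerInterval P (i, j) (k, l))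
    (hαβ : IsInnerInterval P (k, n) (p, l)) (hik : i < k) (hjn : j < n) (hnl : n < l)
    (hkp : k < p)
    (h₁ : IsLM po (innerMinor K (i, j) (k, l)) (mono2 (i, j) (k, l)))
    (h₂ : IsLM po (innerMinor K (k, n) (p, l)) (mono2 (k, l) (p, n))) :
    ReducesToZero po (minorsSet K P)
        (monomial (mono3 (i, j) (k, n) (p, l)) 1 - monomial (mono3 (p, n) (i, l) (k, j)) 1) ↔
      (lexLt po (mono3 (i, j) (k, n) (p, l)) (mono3 (p, n) (i, l) (k, j)) ∧
        (lexLt po (mono2 (i, n) (p, l)) (mono2 (i, l) (p, n)) ∨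
          (IsInnerInterval P (k, j) (p, n) ∧
            lexLt po (mono2 (p, j) (k, n)) (mono2 (p, n) (k, j))))) ∨
      (lexLt po (mono3 (p, n) (i, l) (k, j)) (mono3 (i, j) (k, n) (p, l)) ∧
        (lexLt po (mono2 (i, n) (k, j)) (mono2 (i, j) (k, n)) ∨
          (IsInnerInterval P (k, j) (p, n) ∧
            lexLt po (mono2 (p, j) (i, l)) (mono2 (i, j) (p, l))))) := by
  constructor
  · intro hred
    have hUV : mono3 (i, j) (k, n) (p, l) ≠ mono3 (p, n) (i, l) (k, j) := fun h => by
      have := eq_or_eq_or_eq_of_mono3_pos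
        (h ▸ (by simp [mono3]) : 0 < mono3 (p, n) (i, l) (k, j) (i, j))
      simp only [Prod.ext_iff] at this
      omega
    rcases lexLt_or_lexLt_of_ne (po := po) hUV with h | h
    · obtain ⟨_, ⟨a', b', hg, rfl⟩, m, hm, hle⟩ :=
        hred.exists_isLM_le (isLM_monomial_sub_monomial_iff.2 (Or.inr ⟨rfl, h⟩))
      exact Or.inl ⟨h, lexLt_cases_of_isLM_le_δcd hik hjn hnl hkp h₁ hg hm hle⟩
    · obtain ⟨_, ⟨a', b', hg, rfl⟩, m, hm, hle⟩ :=
        hred.exists_isLM_le (isLM_monomial_sub_monomial_iff.2 (Or.inl ⟨rfl, h⟩))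
      exact Or.inr ⟨h, lexLt_cases_of_isLM_le_aαβ hik hjn hnl hkp h₂ hg hm hle⟩
  · rintro (⟨h, h₁ | ⟨hdδ, h₂⟩⟩ | ⟨h, h₃ | ⟨hdδ, h₄⟩⟩)
    · refine reducesToZero_sPoly_via_hβ hab hαβ hjn hnl
        (isLM_monomial_sub_monomial_iff.2 (Or.inr ⟨rfl, h⟩)) ?_
      rwa [mono3_swap_right (i, n), mono3_swap_left (p, n), lexLt_mono3_mono3_iff]
    · refine reducesToZero_sPoly_via_dδ hab hαβ hdδ
        (isLM_monomial_sub_monomial_iff.2 (Or.inr ⟨rfl, h⟩)) ?_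
      rwa [show mono3 (i, l) (k, n) (p, j) = mono3 (p, j) (k, n) (i, l) by
          simp only [mono3]; abel,
        mono3_swap_right (p, n), lexLt_mono3_mono3_iff]
    · refine reducesToZero_sPoly_via_hβ hab hαβ hjn hnl
        (isLM_monomial_sub_monomial_iff.2 (Or.inl ⟨rfl, h⟩)) ?_
      rwa [lexLt_mono3_mono3_iff]
    · refine reducesToZero_sPoly_via_dδ hab hαβ hdδ
        (isLM_monomial_sub_monomial_iff.2 (Or.inl ⟨rfl, h⟩)) ?_
      rwa [show mono3 (i, l) (k, n) (p, j) = mono3 (p, j) (i, l) (k, n) by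
          simp only [mono3]; abel,
        mono3_swap_right (i, j), lexLt_mono3_mono3_iff]

end Configuration

theorem sPoly_reducesToZero_iff_case2_general
    (K : Type*) [Field K] (P : Finset Pt)
    (i j k l n p : ℤ)
    (a b c d α β δ h r : Pt)
    (ha : a = (i, j)) (hb : b = (k, l)) (hc : c = (i, l)) (hd : d = (k, j))
    (hα : α = (k, n)) (hβ : β = (p, l)) (hδ : δ = (p, n))
    (hh : h = (i, n)) (hr : r = (p, j))
    (hik : i < k) (hjn : j < n) (hnl : n < l) (hkp : k < p)
    (hab : IsInnerInterval P a b) (hαβ : IsInnerInterval P α β)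
    (po : Pt → Pt → Prop) (hpo : IsStrictTotalOrder Pt po)
    (hgcd : ∃ mf mg : Pt →₀ ℕ, IsLM po (innerMinor K a b) mf ∧
      IsLM po (innerMinor K α β) mg ∧ ∃ w, 0 < mf w ∧ 0 < mg w) :
    (∀ sp, IsSPoly po (innerMinor K a b) (innerMinor K α β) sp →
        ReducesToZero po (minorsSet K P) sp) ↔
      ((lexLt po (mono3 a α β) (mono3 δ c d) ∧
          ((po h c ∧ po β c) ∨ (po h δ ∧ po β δ))) ∨
       (lexLt po (mono3 a α β) (mono3 δ c d) ∧
          (∃ u v : Pt, IsInnerInterval P u v ∧ cornersOf u v = ({d, δ, α, r} : Finset Pt)) ∧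
          ((po r δ ∧ po α δ) ∨ (po r d ∧ po α d))) ∨
       (lexLt po (mono3 δ c d) (mono3 a α β) ∧
          ((po h a ∧ po d a) ∨ (po h α ∧ po d α))) ∨
       (lexLt po (mono3 δ c d) (mono3 a α β) ∧
          (∃ u v : Pt, IsInnerInterval P u v ∧ cornersOf u v = ({d, δ, α, r} : Finset Pt)) ∧
          ((po r a ∧ po c a) ∨ (po r β ∧ po c β)))) := by
  subst ha hb hc hd hα hβ hδ hh hr
  have := hpo
  obtain ⟨h₁, h₂⟩ := isLM_innerMinors_of_common_variable hik hjn hnl hkp hgcd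
  have hdδ : (∃ u v, IsInnerInterval P u v ∧
      cornersOf u v = ({(k, j), (p, n), (k, n), (p, j)} : Finset Pt)) ↔
      IsInnerInterval P (k, j) (p, n) :=
    exists_cornersOf_eq_iff hkp hjn
  simp only [isSPoly_innerMinor_iff hik hjn hnl hkp h₁ h₂, forall_eq, hdδ]
  rw [reducesToZero_sPoly_iff hab hαβ hik hjn hnl hkp h₁ h₂, lexLt_mono2_mono2_iff,
    lexLt_mono2_mono2_iff, lexLt_mono2_mono2_iff, lexLt_mono2_mono2_iff]
  · simp only [and_or_left, or_assoc]
  all_goals simp only [ne_eq, Prod.mk.injEq]; omega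

theorem sPoly_reducesToZero_iff_case2
    (K : Type*) [Field K] (P : Finset Pt) (hP : P.Nonempty)
    (i j k l n p : ℤ)
    (a b c d α β γ δ h r : Pt)
    (ha : a = (i, j)) (hb : b = (k, l)) (hc : c = (i, l)) (hd : d = (k, j))
    (hα : α = (k, n)) (hβ : β = (p, l)) (hγ : γ = b) (hδ : δ = (p, n))
    (hh : h = (i, n)) (hr : r = (p, j))
    (hik : i < k) (hjn : j < n) (hnl : n < l) (hkp : k < p)
    (hab : IsInnerInterval P a b) (hαβ : IsInnerInterval P α β)
    (po : Pt → Pt → Prop) (hpo : IsStrictTotalOrder Pt po)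
    (hgcd : ∃ mf mg : Pt →₀ ℕ, IsLM po (innerMinor K a b) mf ∧
      IsLM po (innerMinor K α β) mg ∧ ∃ w, 0 < mf w ∧ 0 < mg w) :
    (∀ sp, IsSPoly po (innerMinor K a b) (innerMinor K α β) sp →
        ReducesToZero po (minorsSet K P) sp) ↔
      ((lexLt po (mono3 a α β) (mono3 δ c d) ∧
          ((po h c ∧ po β c) ∨ (po h δ ∧ po β δ))) ∨
       (lexLt po (mono3 a α β) (mono3 δ c d) ∧
          (∃ u v : Pt, IsInnerInterval P u v ∧ cornersOf u v = ({d, δ, α, r} : Finset Pt)) ∧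
          ((po r δ ∧ po α δ) ∨ (po r d ∧ po α d))) ∨
       (lexLt po (mono3 δ c d) (mono3 a α β) ∧
          ((po h a ∧ po d a) ∨ (po h α ∧ po d α))) ∨
       (lexLt po (mono3 δ c d) (mono3 a α β) ∧
          (∃ u v : Pt, IsInnerInterval P u v ∧ cornersOf u v = ({d, δ, α, r} : Finset Pt)) ∧
          ((po r a ∧ po c a) ∨ (po r β ∧ po c β)))) :=
  sPoly_reducesToZero_iff_case2_general K P i j k l n p a b c d α β δ h r ha hb hc hd hα hβ hδ hh hr
    hik hjn hnl hkp hab hαβ po hpo hgcd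

end ClosedPathPaper
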